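/- arXiv:2411.07178 — 2 statements merged into one kernel-verified Lean document; each statement's English description precedes it below -/
import Mathlib

section
/- (Chebyshev equioscillation, sufficiency) Let f ∈ C[0,1] and p a polynomial of degree at most n with A = ‖f − p‖. If there exist n+2 points 0 ≤ t₀ < t₁ < ⋯ < t_{n+1} ≤ 1 and ε ∈ {1,−1} such that f(tᵢ) − p(tᵢ) = ε·A·(−1)ⁱ for i = 0,…,n+1, then p is a best uniform approximation to f from polynomials of degree ≤ n. -/
/-!
If some `q ∈ 𝒫ₙ` were strictly better than `p`, then at every `tᵢ` we would have
`|(f - q)(tᵢ)| < A = |(f - p)(tᵢ)|`, so `p - q = (f - q) - (f - p)` takes the sign of `-(f - p)(tᵢ)`,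
which alternates. By the intermediate value theorem `p - q` then has a root between any two
consecutive `tᵢ`, i.e. `n + 1` distinct roots, which forces `n + 1 ≤ deg (p - q) ≤ n`.
-/

/-- The subspace `𝒫ₙ ⊆ C[0,1]` of (restrictions of) real polynomials of degree `≤ n`. -/
def Pn (n : ℕ) : Set C(Set.Icc (0 : ℝ) 1, ℝ) :=
  {g | ∃ p : Polynomial ℝ, p.natDegree ≤ n ∧ ∀ t : Set.Icc (0 : ℝ) 1, g t = p.eval (t : ℝ)}

open Polynomial

lemma exists_mem_Ioo_eq_zero_of_mul_neg {g : ℝ → ℝ} {a b : ℝ} (hab : a ≤ b)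
    (hg : ContinuousOn g (Set.Icc a b)) (hsign : g a * g b < 0) :
    ∃ c ∈ Set.Ioo a b, g c = 0 := by
  rcases mul_neg_iff.1 hsign with ⟨ha, hb⟩ | ⟨ha, hb⟩
  · exact intermediate_value_Ioo' hab hg ⟨hb, ha⟩
  · exact intermediate_value_Ioo hab hg ⟨ha, hb⟩

lemma Polynomial.le_natDegree_of_sign_changes {R : ℝ[X]} {m : ℕ} {x : Fin (m + 1) → ℝ}
    (hx : StrictMono x) (hsign : ∀ i : Fin m, R.eval (x i.castSucc) * R.eval (x i.succ) < 0) :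
    m ≤ R.natDegree := by
  have hroot (i : Fin m) : ∃ c ∈ Set.Ioo (x i.castSucc) (x i.succ), R.eval c = 0 :=
    exists_mem_Ioo_eq_zero_of_mul_neg (hx Fin.castSucc_lt_succ).le
      R.continuous.continuousOn (hsign i)
  choose c hc hRc using hroot
  have hc_mono : StrictMono c := fun i j hij =>
    calc c i < x i.succ := (hc i).2
      _ ≤ x j.castSucc := hx.monotone (Fin.succ_le_castSucc_iff.2 hij)
      _ < c j := (hc j).1
  by_contra! hlt
  have hR : R = 0 :=
    eq_zero_of_natDegree_lt_card_of_eval_eq_zero R hc_mono.injective hRc (by simpa using hlt)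
  simpa [hR] using hsign ⟨0, by omega⟩

lemma sub_mul_add_neg_of_abs_lt {s u v A : ℝ} (hs : s = 1 ∨ s = -1) (hu : |u| < A)
    (hv : |v| < A) : (u - s * A) * (v + s * A) < 0 := by
  rw [abs_lt] at hu hv
  rcases hs with rfl | rfl
  · exact mul_neg_of_neg_of_pos (by linarith) (by linarith)
  · exact mul_neg_of_pos_of_neg (by linarith) (by linarith)

/-- Chebyshev equioscillation (sufficiency): if `f − p` attains `±‖f − p‖` with
alternating signs at `n+2` increasing points of `[0,1]`, then `p ∈ 𝒫ₙ` is a best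
uniform approximation to `f` from `𝒫ₙ`. -/
theorem stmt_10 (n : ℕ) (f p : C(Set.Icc (0 : ℝ) 1, ℝ)) (hp : p ∈ Pn n)
    (A : ℝ) (hA : A = ‖f - p‖)
    (t : Fin (n + 2) → Set.Icc (0 : ℝ) 1) (hmono : StrictMono fun i => (t i : ℝ))
    (ε : ℝ) (hε : ε = 1 ∨ ε = -1)
    (hosc : ∀ i : Fin (n + 2), f (t i) - p (t i) = ε * A * (-1) ^ (i : ℕ)) :
    ∀ q ∈ Pn n, ‖f - p‖ ≤ ‖f - q‖ := by
  intro q hq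
  by_contra! hlt
  obtain ⟨P, hPdeg, hP⟩ := hp
  obtain ⟨Q, hQdeg, hQ⟩ := hq
  have heval (i : Fin (n + 2)) :
      (P - Q).eval (t i : ℝ) = (f - q) (t i) - ε * A * (-1) ^ (i : ℕ) := by
    rw [← hosc, eval_sub, ← hP, ← hQ, ContinuousMap.sub_apply]
    ring
  have hsmall (i : Fin (n + 2)) : |(f - q) (t i)| < A :=
    hA ▸ ((f - q).norm_coe_le_norm (t i)).trans_lt hlt
  have hsign (i : Fin (n + 1)) :
      (P - Q).eval (t i.castSucc : ℝ) * (P - Q).eval (t i.succ : ℝ) < 0 := by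
    rw [heval, heval, Fin.val_succ, pow_succ, Fin.val_castSucc]
    have hs : ε * (-1) ^ (i : ℕ) = 1 ∨ ε * (-1) ^ (i : ℕ) = -1 := by
      rcases hε with rfl | rfl <;> rcases neg_one_pow_eq_or ℝ (i : ℕ) with h | h <;> simp [h]
    convert sub_mul_add_neg_of_abs_lt hs (hsmall i.castSucc) (hsmall i.succ) using 1
    ring
  have hdeg := (P - Q).le_natDegree_of_sign_changes hmono hsign
  have hdeg_sub := natDegree_sub_le P Q
  omega
end

section
/- Let f ∈ C[0,1] with p = P_{𝒫ₙ}(f), and let μ, γ ∈ C*[0,1] (regular signed Borel measures on [0,1]). If μ([0,1]) ≠ γ([0,1]), then γ does not belong to the Fréchet (Mordukhovich regular) coderivative D̂*P_{𝒫ₙ}(f)(μ). -/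
/-- `inCoderiv P f μ φ` says that `φ` belongs to the Fréchet (regular Mordukhovich)
coderivative `D̂*P(f)(μ)` of the single-valued map `P` at `f`:
`limsup_{g→f, g≠f} (⟨φ, g−f⟩ − ⟨μ, P(g)−P(f)⟩)/(‖g−f‖+‖P(g)−P(f)‖) ≤ 0`. -/
def inCoderiv (P : C(Set.Icc (0 : ℝ) 1, ℝ) → C(Set.Icc (0 : ℝ) 1, ℝ))
    (f : C(Set.Icc (0 : ℝ) 1, ℝ))
    (μ φ : StrongDual ℝ C(Set.Icc (0 : ℝ) 1, ℝ)) : Prop :=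
  Filter.limsup
    (fun g => (φ (g - f) - μ (P g - P f)) / (‖g - f‖ + ‖P g - P f‖))
    (nhdsWithin f {f}ᶜ) ≤ 0

open Filter Topology Polynomial

theorem abs_sub_lt_of_mul_pos {α : Type*} [Field α] [LinearOrder α] [IsStrictOrderedRing α]
    {a b c : α} (hab : 0 < a * b) (ha : |a| ≤ c) (hb : |b| < c) :
    |a - b| < c := by
  rw [abs_le] at ha
  rw [abs_lt] at hb ⊢
  rcases mul_pos_iff.mp hab with ⟨ha0, hb0⟩ | ⟨ha0, hb0⟩ <;> constructor <;> linarith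

theorem Polynomial.exists_natDegree_le_eval_eq {K : Type*} [Field K] {n : ℕ} {s : Finset K}
    (hs : s.card ≤ n + 1) (F : K → K) :
    ∃ Q : K[X], Q.natDegree ≤ n ∧ ∀ x ∈ s, Q.eval x = F x := by
  classical
  have hdeg := Lagrange.degree_interpolate_lt F (Set.injOn_id (s : Set K))
  refine ⟨Lagrange.interpolate s id F, ?_, fun x hx => Lagrange.eval_interpolate_at_node F
    (Set.injOn_id _) hx⟩
  rw [natDegree_le_iff_degree_le, ← mem_degreeLE, ← degreeLT_succ_eq_degreeLE, mem_degreeLT]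
  exact hdeg.trans_le (by exact_mod_cast hs)

def IsBestApprox {E : Type*} [SeminormedAddCommGroup E] (S : Set E) (g p : E) : Prop :=
  p ∈ S ∧ ∀ r ∈ S, ‖g - p‖ ≤ ‖g - r‖

theorem IsBestApprox.add {E : Type*} [SeminormedAddCommGroup E] {S : AddSubgroup E} {g p v : E}
    (hp : IsBestApprox S g p) (hv : v ∈ S) : IsBestApprox S (g + v) (p + v) := by
  refine ⟨add_mem hp.1 hv, fun r hr => ?_⟩
  rw [add_sub_add_right_eq_sub, show g + v - r = g - (r - v) by abel]
  exact hp.2 _ (sub_mem hr hv)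

namespace ContinuousMap

variable {X : Type*} [TopologicalSpace X] [CompactSpace X]

theorem abs_apply_le_norm (h : C(X, ℝ)) (x : X) : |h x| ≤ ‖h‖ := by
  simpa only [Real.norm_eq_abs] using h.norm_coe_le_norm x

/-- On the compact set where `h * q ≤ 0`, `|h|` stays a fixed distance below `‖h‖`; elsewhere
`h x` and `l * q x` have the same sign, so subtracting the latter cannot overshoot. -/
theorem exists_norm_sub_smul_lt {h q : C(X, ℝ)} (hh : h ≠ 0)
    (hq : ∀ x, |h x| = ‖h‖ → 0 < h x * q x) : ∃ l : ℝ, 0 < l ∧ ‖h - l • q‖ < ‖h‖ := by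
  have hpos : 0 < ‖h‖ := norm_pos_iff.mpr hh
  set A := {x | h x * q x ≤ 0}
  have hA : IsCompact A := (isClosed_le (by fun_prop) continuous_const).isCompact
  obtain ⟨δ, hδ, hδA⟩ : ∃ δ, 0 < δ ∧ ∀ x ∈ A, δ ≤ ‖h‖ - |h x| :=
    hA.exists_forall_le' (by fun_prop) fun x hx => sub_pos.mpr <|
      (h.abs_apply_le_norm x).lt_of_ne fun hpeak => (hq x hpeak).not_ge hx
  obtain ⟨l, hl, hlq⟩ := exists_pos_mul_lt (lt_min hδ hpos) ‖q‖
  refine ⟨l, hl, (norm_lt_iff _ hpos).mpr fun x => ?_⟩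
  have hqx : |l * q x| < min δ ‖h‖ := by
    rw [abs_mul, abs_of_pos hl, mul_comm]
    exact lt_of_le_of_lt (by gcongr; exact q.abs_apply_le_norm x) hlq
  rw [Real.norm_eq_abs, sub_apply, smul_apply, smul_eq_mul]
  by_cases hx : x ∈ A
  · calc |h x - l * q x| ≤ |h x| + |l * q x| := abs_sub _ _
      _ < ‖h‖ := by linarith [hδA x hx, min_le_left δ ‖h‖]
  · refine abs_sub_lt_of_mul_pos ?_ (h.abs_apply_le_norm x) (hqx.trans_le (min_le_right _ _))
    rw [mul_left_comm]
    exact mul_pos hl (not_le.mp hx)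

end ContinuousMap

/-- A form of the Haar condition. -/
def InterpolatesOnZeros {X : Type*} [TopologicalSpace X] (S : Set C(X, ℝ)) : Prop :=
  ∀ p ∈ S, p ≠ 0 → ∀ h : C(X, ℝ), ∃ q ∈ S, ∀ x, p x = 0 → q x = h x

theorem IsBestApprox.unique {X : Type*} [TopologicalSpace X] [CompactSpace X]
    {S : Submodule ℝ C(X, ℝ)} (hS : InterpolatesOnZeros (S : Set C(X, ℝ))) {g p₁ p₂ : C(X, ℝ)}
    (h₁ : IsBestApprox S g p₁) (h₂ : IsBestApprox S g p₂) : p₁ = p₂ := by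
  by_contra hne
  set d := ‖g - p₁‖
  have hd₂ : ‖g - p₂‖ = d := le_antisymm (h₂.2 _ h₁.1) (h₁.2 _ h₂.1)
  set m : C(X, ℝ) := (2⁻¹ : ℝ) • (p₁ + p₂)
  have hm : m ∈ S := S.smul_mem _ (S.add_mem h₁.1 h₂.1)
  set e := g - m
  have he : e = (2⁻¹ : ℝ) • ((g - p₁) + (g - p₂)) := by simp only [e, m]; module
  have hed : ‖e‖ = d := by
    refine le_antisymm ?_ (h₁.2 m hm)
    calc ‖e‖ ≤ 2⁻¹ * (‖g - p₁‖ + ‖g - p₂‖) := by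
          rw [he, norm_smul, Real.norm_of_nonneg (by norm_num)]; gcongr; exact norm_add_le _ _
      _ = d := by rw [hd₂]; ring
  have he0 : e ≠ 0 := by
    intro he0
    have hd : d = 0 := by rw [← hed, he0, norm_zero]
    exact hne <| (sub_eq_zero.mp (norm_eq_zero.mp hd)).symm.trans
      (sub_eq_zero.mp (norm_eq_zero.mp (hd₂.trans hd)))
  have hpeak : ∀ x, |e x| = ‖e‖ → (p₁ - p₂) x = 0 := by
    intro x hx
    have ha := abs_le.mp ((g - p₁).abs_apply_le_norm x)
    have hb := abs_le.mp (hd₂ ▸ (g - p₂).abs_apply_le_norm x)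
    rw [hed, he] at hx
    simp only [ContinuousMap.smul_apply, ContinuousMap.add_apply, ContinuousMap.sub_apply,
      smul_eq_mul] at hx ha hb ⊢
    rcases abs_eq_abs.mp (hx.trans (abs_of_nonneg (norm_nonneg _)).symm) with h | h <;> linarith
  obtain ⟨q, hqS, hq⟩ := hS _ (S.sub_mem h₁.1 h₂.1) (sub_ne_zero.mpr hne) e
  obtain ⟨l, -, hl⟩ := e.exists_norm_sub_smul_lt he0 fun x hx => by
    rw [hq x (hpeak x hx)]
    exact mul_self_pos.mpr (abs_pos.mp (hx ▸ norm_pos_iff.mpr he0))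
  have hopt : d ≤ ‖e - l • q‖ := by
    simpa only [e, sub_sub] using h₁.2 (m + l • q) (S.add_mem hm (S.smul_mem l hqS))
  linarith

noncomputable def Pn.submodule (n : ℕ) : Submodule ℝ C(Set.Icc (0 : ℝ) 1, ℝ) :=
  (degreeLE ℝ n).map (toContinuousMapOnAlgHom (Set.Icc (0 : ℝ) 1)).toLinearMap

theorem Pn.coe_submodule (n : ℕ) : (Pn.submodule n : Set C(Set.Icc (0 : ℝ) 1, ℝ)) = Pn n := by
  ext g
  simp [Pn.submodule, Pn, mem_degreeLE, ContinuousMap.ext_iff, ← natDegree_le_iff_degree_le,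
    eq_comm]

theorem Pn.one_mem (n : ℕ) : (1 : C(Set.Icc (0 : ℝ) 1, ℝ)) ∈ Pn.submodule n :=
  ⟨1, by simp [mem_degreeLE], map_one (toContinuousMapOnAlgHom _)⟩

theorem Pn.interpolatesOnZeros (n : ℕ) : InterpolatesOnZeros (Pn n) := by
  rintro p ⟨r, hr, hpr⟩ hp0 h
  have hr0 : r ≠ 0 := by
    rintro rfl
    exact hp0 (ContinuousMap.ext fun t => by simp [hpr t])
  have hcard : r.roots.toFinset.card ≤ n + 1 :=
    (Multiset.toFinset_card_le _).trans ((card_roots' r).trans (hr.trans n.le_succ))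
  obtain ⟨Q, hQ, hQs⟩ := exists_natDegree_le_eval_eq hcard (Set.IccExtend zero_le_one h)
  refine ⟨Q.toContinuousMapOn _, ⟨Q, hQ, fun t => rfl⟩, fun t ht => ?_⟩
  rw [toContinuousMapOn_apply, toContinuousMap_apply, hQs, Set.IccExtend_val]
  simpa [mem_roots hr0, ← hpr t] using ht

section Coderivative

variable {P : C(Set.Icc (0 : ℝ) 1, ℝ) → C(Set.Icc (0 : ℝ) 1, ℝ)} {f v : C(Set.Icc (0 : ℝ) 1, ℝ)}
  {μ φ : StrongDual ℝ C(Set.Icc (0 : ℝ) 1, ℝ)}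

theorem inCoderiv.apply_sub_apply_nonpos (hcod : inCoderiv P f μ φ) (hv : v ≠ 0)
    (hP : ∀ t : ℝ, P (f + t • v) = P f + t • v) : φ v - μ v ≤ 0 := by
  have hv' : 0 < 2 * ‖v‖ := by positivity
  set u := fun g => (φ (g - f) - μ (P g - P f)) / (‖g - f‖ + ‖P g - P f‖)
  have hbdd : IsBoundedUnder (· ≤ ·) (𝓝[≠] f) u := by
    refine isBoundedUnder_of_eventually_le (a := ‖φ‖ + ‖μ‖) (Eventually.of_forall fun g => ?_)
    refine div_le_of_le_mul₀ (by positivity) (by positivity) ?_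
    have hφ := (le_abs_self _).trans (φ.le_opNorm (g - f))
    have hμ := (neg_le_abs _).trans (μ.le_opNorm (P g - P f))
    nlinarith [norm_nonneg φ, norm_nonneg μ, norm_nonneg (g - f), norm_nonneg (P g - P f)]
  have hval : ∀ t : ℝ, 0 < t → u (f + t • v) = (φ v - μ v) / (2 * ‖v‖) := by
    intro t ht
    simp only [u, hP, add_sub_cancel_left, map_smul, smul_eq_mul, norm_smul,
      Real.norm_of_nonneg ht.le]
    field_simp
    ring
  have htend : Tendsto (fun t : ℝ => f + t • v) (𝓝[>] (0 : ℝ)) (𝓝[≠] f) := by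
    refine tendsto_nhdsWithin_of_tendsto_nhds_of_eventually_within _ ?_ ?_
    · simpa using (tendsto_nhdsWithin_of_tendsto_nhds
        ((continuous_const.add (continuous_id.smul continuous_const)).tendsto 0) :
          Tendsto (fun t : ℝ => f + t • v) (𝓝[>] (0 : ℝ)) _)
    · filter_upwards [self_mem_nhdsWithin] with t ht
      simpa [hv] using ht.ne'
  have hnear : ∀ᶠ t in 𝓝[>] (0 : ℝ), (φ v - μ v) / (2 * ‖v‖) ≤ u (f + t • v) :=
    eventually_mem_nhdsWithin.mono fun t ht => (hval t ht).ge
  have hfreq : ∃ᶠ g in 𝓝[≠] f, (φ v - μ v) / (2 * ‖v‖) ≤ u g := htend.frequently hnear.frequently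
  have hle := (le_limsup_of_frequently_le hfreq hbdd).trans hcod
  simpa using (div_le_iff₀ hv').mp hle

theorem inCoderiv.apply_eq_of_translate (hcod : inCoderiv P f μ φ) (hv : v ≠ 0)
    (hP : ∀ t : ℝ, P (f + t • v) = P f + t • v) : φ v = μ v := by
  have hneg : ∀ t : ℝ, P (f + t • -v) = P f + t • -v := fun t => by
    simpa only [smul_neg, neg_smul] using hP (-t)
  have h₁ := hcod.apply_sub_apply_nonpos hv hP
  have h₂ := hcod.apply_sub_apply_nonpos (neg_ne_zero.mpr hv) hneg
  rw [map_neg, map_neg] at h₂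
  linarith

end Coderivative

/-- Let `P` be the metric projection of `C[0,1]` onto `𝒫ₙ` and `μ, γ ∈ C*[0,1]`.
If `μ([0,1]) ≠ γ([0,1])` (pairings with the constant function 1 differ), then
`γ ∉ D̂*P(f)(μ)`. -/
theorem stmt_16 (n : ℕ) (P : C(Set.Icc (0 : ℝ) 1, ℝ) → C(Set.Icc (0 : ℝ) 1, ℝ))
    (hP : ∀ g, P g ∈ Pn n ∧ ∀ r ∈ Pn n, ‖g - P g‖ ≤ ‖g - r‖)
    (f : C(Set.Icc (0 : ℝ) 1, ℝ))
    (μ γ : StrongDual ℝ C(Set.Icc (0 : ℝ) 1, ℝ))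
    (hne : μ (1 : C(Set.Icc (0 : ℝ) 1, ℝ)) ≠ γ (1 : C(Set.Icc (0 : ℝ) 1, ℝ))) :
    ¬ inCoderiv P f μ γ := by
  have hbest : ∀ g, IsBestApprox (Pn.submodule n : Set _) g (P g) := by
    rw [Pn.coe_submodule]
    exact hP
  have hinterp : InterpolatesOnZeros (Pn.submodule n : Set C(Set.Icc (0 : ℝ) 1, ℝ)) := by
    rw [Pn.coe_submodule]
    exact Pn.interpolatesOnZeros n
  have htranslate : ∀ t : ℝ, P (f + t • 1) = P f + t • 1 := fun t =>
    (hbest _).unique hinterp ((hbest f).add (S := (Pn.submodule n).toAddSubgroup)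
      ((Pn.submodule n).smul_mem t (Pn.one_mem n)))
  exact fun hcod => hne (hcod.apply_eq_of_translate one_ne_zero htranslate).symm
end
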